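/- Let ℓ ≥ 2 and B, n be positive reals with B ≥ n²·ℓ and n ≥ ∑_{t=1}^{ℓ} n_t, where n₁ = 1, n₂ = 2, n_t = 4^{t−1}·∑_{s=1}^{t−1} n_s for t ≥ 3. Define γ_t = B/n_{t+1} + 1 for t ∈ {1,…,ℓ−1}. Then ∑_{t=1}^{ℓ−1} n_t · (∑_{s=t}^{ℓ−1} γ_s) ≤ B. -/

import Mathlib

lemma geom_aux : ∀ m : ℕ, ∑ s ∈ Finset.Icc 1 m, ((1:ℝ)/4)^s = (1 - (1/4)^m)/3 := by
  intro m
  induction m with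
  | zero => simp
  | succ k ih =>
    rw [Finset.sum_Icc_succ_top (by omega), ih, pow_succ]
    ring

/-- Key inequality showing all items of the lower-bound instance fit in one
bin delivered at the latest due time. -/
theorem stmt_11 (f : ℕ → ℕ)
    (h1 : f 1 = 1) (h2 : f 2 = 2)
    (hrec : ∀ t, 3 ≤ t → f t = 4 ^ (t - 1) * ∑ s ∈ Finset.Icc 1 (t - 1), f s)
    (ℓ : ℕ) (hℓ : 2 ≤ ℓ) (B n : ℝ) (hBpos : 0 < B) (hnpos : 0 < n)
    (hB : n ^ 2 * ℓ ≤ B)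
    (hn : (∑ t ∈ Finset.Icc 1 ℓ, (f t : ℝ)) ≤ n)
    (γ : ℕ → ℝ) (hγ : ∀ t, 1 ≤ t → t ≤ ℓ - 1 → γ t = B / f (t + 1) + 1) :
    ∑ t ∈ Finset.Icc 1 (ℓ - 1), (f t : ℝ) * (∑ s ∈ Finset.Icc t (ℓ - 1), γ s)
      ≤ B := by
  set m := ℓ - 1 with hm
  -- positivity of f (s+1) for s ≥ 1, and the key growth inequality
  have hSpos : ∀ s : ℕ, 1 ≤ s → 1 ≤ ∑ t ∈ Finset.Icc 1 s, f t := by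
    intro s hs
    calc 1 = f 1 := h1.symm
    _ ≤ ∑ t ∈ Finset.Icc 1 s, f t :=
        Finset.single_le_sum (fun i _ => Nat.zero_le _) (by simp [Finset.mem_Icc, hs])
  have hfpos : ∀ s : ℕ, 1 ≤ s → 0 < f (s + 1) := by
    intro s hs
    rcases eq_or_lt_of_le hs with h | h
    · rw [← h, show (1:ℕ) + 1 = 2 from rfl, h2]; norm_num
    · rw [hrec (s + 1) (by omega)]
      simp only [Nat.add_sub_cancel]
      exact Nat.mul_pos (Nat.pow_pos (by norm_num)) (hSpos s hs)
  have hkey : ∀ s : ℕ, 1 ≤ s →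
      (4:ℝ) ^ s * (∑ t ∈ Finset.Icc 1 s, (f t : ℝ)) ≤ 2 * f (s + 1) := by
    intro s hs
    rcases eq_or_lt_of_le hs with h | h
    · rw [← h]
      simp [h1, h2]
      norm_num
    · have heq : (f (s + 1) : ℝ) = 4 ^ s * ∑ t ∈ Finset.Icc 1 s, (f t : ℝ) := by
        rw [hrec (s + 1) (by omega)]
        simp only [Nat.add_sub_cancel]
        push_cast
        ring
      rw [← heq]
      have : (0:ℝ) ≤ (f (s+1) : ℝ) := Nat.cast_nonneg _
      linarith
  -- partial sums bounded by n
  have hSn : ∀ s : ℕ, s ≤ ℓ → (∑ t ∈ Finset.Icc 1 s, (f t : ℝ)) ≤ n := by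
    intro s hsℓ
    refine le_trans ?_ hn
    exact Finset.sum_le_sum_of_subset_of_nonneg
      (Finset.Icc_subset_Icc_right hsℓ) (fun i _ _ => Nat.cast_nonneg _)
  -- swap the double sum
  have hswap : ∑ t ∈ Finset.Icc 1 m, (f t : ℝ) * (∑ s ∈ Finset.Icc t m, γ s)
      = ∑ s ∈ Finset.Icc 1 m, (∑ t ∈ Finset.Icc 1 s, (f t : ℝ)) * γ s := by
    simp_rw [Finset.mul_sum, Finset.sum_mul]
    exact Finset.sum_comm' (fun t s => by simp [Finset.mem_Icc]; omega)
  rw [hswap]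
  -- bound each term
  have hterm : ∀ s ∈ Finset.Icc 1 m,
      (∑ t ∈ Finset.Icc 1 s, (f t : ℝ)) * γ s ≤ 2 * (1/4:ℝ) ^ s * B + n := by
    intro s hsmem
    rw [Finset.mem_Icc] at hsmem
    obtain ⟨hs1, hsm⟩ := hsmem
    rw [hγ s hs1 hsm]
    set S := ∑ t ∈ Finset.Icc 1 s, (f t : ℝ) with hS
    have hSnonneg : (0:ℝ) ≤ S := Finset.sum_nonneg fun i _ => Nat.cast_nonneg _
    have hF : (0:ℝ) < f (s + 1) := by exact_mod_cast hfpos s hs1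
    have h4 : (0:ℝ) < (4:ℝ) ^ s := by positivity
    have h1' : S * (B / f (s + 1)) ≤ 2 * (1/4:ℝ) ^ s * B := by
      rw [mul_div_assoc' , div_le_iff₀ hF]
      have := hkey s hs1
      have hB4 : (0:ℝ) < B / 4 ^ s := by positivity
      calc S * B = (4 ^ s * S) * (B / 4 ^ s) := by field_simp
      _ ≤ (2 * f (s + 1)) * (B / 4 ^ s) := by
          exact mul_le_mul_of_nonneg_right this (le_of_lt hB4)
      _ = 2 * (1/4:ℝ) ^ s * B * f (s + 1) := by
          field_simp
          ring
          rw [← mul_pow]; norm_num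
    have h2' : S ≤ n := hSn s (by omega)
    calc S * (B / f (s + 1) + 1) = S * (B / f (s + 1)) + S := by ring
    _ ≤ 2 * (1/4:ℝ) ^ s * B + n := by linarith
  have hsum := Finset.sum_le_sum hterm
  refine le_trans hsum ?_
  rw [Finset.sum_add_distrib, Finset.sum_const, Nat.card_Icc]
  -- geometric part
  have hgeo : ∑ s ∈ Finset.Icc 1 m, 2 * (1/4:ℝ) ^ s * B ≤ 2 / 3 * B := by
    have : ∑ s ∈ Finset.Icc 1 m, 2 * (1/4:ℝ) ^ s * B
        = 2 * B * ∑ s ∈ Finset.Icc 1 m, (1/4:ℝ) ^ s := by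
      rw [Finset.mul_sum]; apply Finset.sum_congr rfl; intro x _; ring
    rw [this, geom_aux m]
    have hp : (0:ℝ) ≤ (1/4:ℝ) ^ m := by positivity
    nlinarith
  -- linear part
  have hn3 : (3:ℝ) ≤ n := by
    refine le_trans ?_ hn
    have : ((3:ℕ):ℝ) = (3:ℝ) := by norm_num
    rw [← this]
    have hsub : Finset.Icc 1 2 ⊆ Finset.Icc 1 ℓ := Finset.Icc_subset_Icc_right hℓ
    calc ((3:ℕ):ℝ) = ∑ t ∈ Finset.Icc 1 2, (f t : ℝ) := by
          rw [show Finset.Icc 1 2 = {1, 2} by rfl]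
          simp [h1, h2]
          norm_num
    _ ≤ ∑ t ∈ Finset.Icc 1 ℓ, (f t : ℝ) :=
        Finset.sum_le_sum_of_subset_of_nonneg hsub (fun i _ _ => Nat.cast_nonneg _)
  have hlin : ((m : ℕ) : ℝ) * n ≤ 1 / 3 * B := by
    have hmℓ : (m : ℝ) ≤ (ℓ : ℝ) := by
      exact_mod_cast Nat.sub_le ℓ 1
    have hℓpos : (0:ℝ) < (ℓ:ℝ) := by exact_mod_cast (by omega : 0 < ℓ)
    have h1 : (m:ℝ) * n ≤ (ℓ:ℝ) * n := mul_le_mul_of_nonneg_right hmℓ (le_of_lt hnpos)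
    have h2 : (3:ℝ) * ((ℓ:ℝ) * n) ≤ n ^ 2 * ℓ := by
      nlinarith [mul_nonneg (mul_nonneg (sub_nonneg.mpr hn3) hnpos.le) hℓpos.le]
    nlinarith
  simp only [nsmul_eq_mul, Nat.add_sub_cancel]
  linarith
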